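/- arXiv:1608.06968 — 4 statements merged into one kernel-verified Lean document; each statement's English description precedes it below -/
import Mathlib

section
/- For every integer n ≥ 1 let q_n be a probability measure on 𝒫_n (the set of non-increasing sequences of positive integers with sum n) and let q_∞ be a probability measure on 𝒫_∞ that gives full mass to the set of sequences with exactly one infinite part. Then q_n converges weakly to q_∞ with respect to d_𝒫 if and only if for every λ ∈ 𝒫_{<∞}, q_n({(n−‖λ‖, λ)}) → q_∞({(∞,λ)}) as n → ∞, where (n−‖λ‖, λ) denotes the partition of n whose parts are n−‖λ‖ together with the parts of λ (which is a non-increasing sequence for all n ≥ ‖λ‖ + λ₁) and (∞,λ) denotes the element of 𝒫_∞ whose parts are ∞ together with the parts of λ. -/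
open Filter MeasureTheory Topology

/-- `𝒫 = 𝒫_{<∞} ∪ 𝒫_∞`: finite non-increasing sequences with values in `ℕ ∪ {∞}`,
all of whose terms are positive. -/
def IntPartition : Type :=
  {l : List ℕ∞ // l.Pairwise (· ≥ ·) ∧ ∀ x ∈ l, 0 < x}

namespace IntPartition

/-- The truncation `λ ∧ K` of a partition at level `K`. -/
noncomputable def trunc (l : IntPartition) (K : ℕ) : List ℕ∞ :=
  l.1.map fun x => min x (K : ℕ∞)

/-- The distance `d_𝒫(λ,μ) = exp(−inf{K ≥ 0 : λ∧K ≠ μ∧K})`, with `inf ∅ = +∞`. -/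
noncomputable def dP (l m : IntPartition) : ℝ :=
  open scoped Classical in
  if {K : ℕ | trunc l K ≠ trunc m K} = ∅ then 0
  else Real.exp (-((sInf {K : ℕ | trunc l K ≠ trunc m K} : ℕ) : ℝ))

/-- On the countable space `𝒫` every subset is Borel, so we may use the discrete
σ-algebra. -/
instance : MeasurableSpace IntPartition := ⊤

/-- A partition is finite (belongs to `𝒫_{<∞}`) if none of its parts is `∞`. -/
def IsFinitePart (l : IntPartition) : Prop := ∀ x ∈ l.1, x ≠ ⊤

end IntPartition

/-
A ball of radius `e^{-K}` for `d_𝒫` is a cylinder `{μ | μ ∧ K = c}`, so cylinders are clopen and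
form neighbourhood bases. Once `K` exceeds the parts of `λ`, the cylinder `{μ | μ ∧ K = (K, λ)}`
meets the support of `q_∞` exactly in `(∞, λ)`, and that of `q_n`, for `n ≥ ‖λ‖ + K`, exactly in
`(n − ‖λ‖, λ)`; testing weak convergence against its indicator gives one implication.
Conversely, `q_∞` is carried by the atoms `(∞, λ)` and the atoms `(n − ‖λ‖, λ)` converge to them,
so any finitely many atoms of `q_∞` lying in an open set `G` have their `q_n`-counterparts in `G`
for large `n`. Hence `q_∞(G) ≤ liminf q_n(G)`, which is weak convergence by the portmanteau
theorem.
-/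

open Set Function

section Atoms

variable {X ι : Type*} [TopologicalSpace X] [MeasurableSpace X] [MeasurableSingletonClass X]
  [Countable ι] {μ : ℕ → Measure X} {ν : Measure X} {x : ι → X} {A : ℕ → ι → Set X}

theorem le_liminf_measure_of_tendsto_atoms (hx : Injective x) (hν : ν (range x)ᶜ = 0)
    (hA_meas : ∀ n i, MeasurableSet (A n i)) (hA_disj : ∀ n, Pairwise (Disjoint on (A n)))
    (hA : ∀ i, Tendsto (fun n => A n i) atTop (𝓝 (x i)).smallSets)
    (hmass : ∀ i, Tendsto (fun n => μ n (A n i)) atTop (𝓝 (ν {x i})))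
    {G : Set X} (hG : IsOpen G) :
    ν G ≤ liminf (fun n => μ n G) atTop := by
  have hνG : ν G = ∑' i : x ⁻¹' G, ν {x i} := by
    rw [← measure_inter_conull hν, ← measure_iUnion
      (fun i j hij => disjoint_singleton.2 fun h => hij (Subtype.ext (hx h)))
      fun _ => measurableSet_singleton _]
    rw [iUnion_singleton_eq_range, ← image_preimage_eq_inter_range, image_eq_range]
  rw [hνG, ENNReal.tsum_eq_iSup_sum]
  refine iSup_le fun F => ?_
  have hlim : Tendsto (fun n => ∑ i ∈ F, μ n (A n i)) atTop (𝓝 (∑ i ∈ F, ν {x i})) :=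
    tendsto_finsetSum F fun i _ => hmass i
  rw [← hlim.liminf_eq]
  refine liminf_le_liminf ?_
  have hsub : ∀ᶠ n in atTop, ∀ i ∈ F, A n i ⊆ G :=
    F.eventually_all.2 fun i _ => tendsto_smallSets_iff.1 (hA i) G (hG.mem_nhds i.2)
  filter_upwards [hsub] with n hn
  rw [← measure_biUnion_finset (f := fun i : x ⁻¹' G => A n i)
    (fun i _ j _ hij => hA_disj n (Subtype.val_injective.ne hij)) fun i _ => hA_meas n i]
  exact measure_mono (iUnion₂_subset hn)

theorem tendsto_integral_of_tendsto_atoms [OpensMeasurableSpace X] [HasOuterApproxClosed X]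
    [∀ n, IsProbabilityMeasure (μ n)] [IsProbabilityMeasure ν]
    (hx : Injective x) (hν : ν (range x)ᶜ = 0)
    (hA_meas : ∀ n i, MeasurableSet (A n i)) (hA_disj : ∀ n, Pairwise (Disjoint on (A n)))
    (hA : ∀ i, Tendsto (fun n => A n i) atTop (𝓝 (x i)).smallSets)
    (hmass : ∀ i, Tendsto (fun n => μ n (A n i)) atTop (𝓝 (ν {x i})))
    (f : BoundedContinuousFunction X ℝ) :
    Tendsto (fun n => ∫ y, f y ∂(μ n)) atTop (𝓝 (∫ y, f y ∂ν)) :=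
  BoundedContinuousFunction.tendsto_integral_of_forall_integral_le_liminf_integral
    (fun _ hg => integral_le_liminf_integral_of_forall_isOpen_measure_le_liminf_measure hg
      fun _ hG => le_liminf_measure_of_tendsto_atoms hx hν hA_meas hA_disj hA hmass hG) f

end Atoms

theorem List.map_min_eq_iff_eq {α : Type*} [LinearOrder α] {K : α} {L l : List α}
    (hl : ∀ x ∈ l, x < K) : L.map (min · K) = l ↔ L = l := by
  constructor
  · rintro rfl
    have hL : ∀ x ∈ L, x < K := fun x hx => by
      simpa using hl _ (List.mem_map_of_mem hx)
    exact ((List.map_congr_left fun x hx => min_eq_left (hL x hx).le).trans L.map_id').symm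
  · rintro rfl
    exact (List.map_congr_left fun x hx => min_eq_left (hl x hx).le).trans L.map_id'

namespace IntPartition

instance : Countable IntPartition :=
  inferInstanceAs (Countable {l : List ℕ∞ // l.Pairwise (· ≥ ·) ∧ ∀ x ∈ l, 0 < x})

instance [TopologicalSpace IntPartition] : OpensMeasurableSpace IntPartition := ⟨le_top⟩

theorem trunc_eq_of_le {l m : IntPartition} {K K' : ℕ} (hK : K ≤ K')
    (h : trunc l K' = trunc m K') : trunc l K = trunc m K := by
  have key : ∀ p : IntPartition, trunc p K = (trunc p K').map (min · (K : ℕ∞)) := fun p => by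
    simp only [trunc, List.map_map]
    refine List.map_congr_left fun x _ => ?_
    simp [min_assoc, min_eq_right (Nat.cast_le.2 hK)]
  rw [key l, key m, h]

theorem trunc_eq_cons_iff {m : IntPartition} {L : List ℕ∞} {K : ℕ} (hK : ∀ x ∈ L, x < K) :
    trunc m K = (K : ℕ∞) :: L ↔ ∃ v, (K : ℕ∞) ≤ v ∧ m.1 = v :: L := by
  rcases m with ⟨_ | ⟨v, L⟩, hm⟩
  · simp [trunc]
  · simp only [trunc, List.map_cons, List.cons.injEq, min_eq_right_iff,
      List.map_min_eq_iff_eq hK]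
    constructor
    · rintro ⟨hv, rfl⟩
      exact ⟨v, hv, rfl, rfl⟩
    · rintro ⟨w, hw, rfl, rfl⟩
      exact ⟨hw, rfl⟩

theorem IsFinitePart.sum_ne_top {lam : IntPartition} (hlam : IsFinitePart lam) :
    lam.1.sum ≠ ⊤ := by
  have key : ∀ L : List ℕ∞, (∀ x ∈ L, x ≠ ⊤) → L.sum ≠ ⊤ := fun L => by
    induction L with
    | nil => simp
    | cons x L ih => simp_all [ENat.add_eq_top]
  exact key _ hlam

theorem IsFinitePart.eventually_lt {lam : IntPartition} (hlam : IsFinitePart lam) :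
    ∀ᶠ K : ℕ in atTop, ∀ x ∈ lam.1, x < K := by
  obtain ⟨s, hs⟩ := ENat.ne_top_iff_exists.1 hlam.sum_ne_top
  filter_upwards [eventually_gt_atTop s] with K hK x hx
  exact (List.le_sum_of_mem hx).trans_lt (hs ▸ Nat.cast_lt.2 hK)

theorem IsFinitePart.eventually_sum_add_le {lam : IntPartition} (hlam : IsFinitePart lam)
    (K : ℕ) : ∀ᶠ n : ℕ in atTop, lam.1.sum + K ≤ n := by
  obtain ⟨s, hs⟩ := ENat.ne_top_iff_exists.1 hlam.sum_ne_top
  filter_upwards [eventually_ge_atTop (s + K)] with n hn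
  rw [← hs]
  exact_mod_cast hn

def consTop (lam : IntPartition) : IntPartition :=
  ⟨⊤ :: lam.1, List.pairwise_cons.2 ⟨fun _ _ => le_top, lam.2.1⟩,
    List.forall_mem_cons.2 ⟨ENat.top_pos, lam.2.2⟩⟩

theorem consTop_injective : Injective consTop :=
  fun _ _ h => Subtype.ext (List.cons_injective (congrArg Subtype.val h))

/-- Empty unless `v` is at least the largest part of `lam`. -/
def consSet (v : ℕ∞) (lam : IntPartition) : Set IntPartition :=
  {l | l.1 = v :: lam.1}

theorem consSet_top (lam : IntPartition) : consSet ⊤ lam = {consTop lam} :=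
  Set.ext fun _ => ⟨fun h => Subtype.ext h, fun h => h ▸ rfl⟩

theorem pairwise_disjoint_consSet (v : IntPartition → ℕ∞) :
    Pairwise (Disjoint on fun lam => consSet (v lam) lam) := fun _ _ hne =>
  Set.disjoint_left.2 fun _ ha hb => hne (Subtype.ext (List.cons_eq_cons.1 (ha.symm.trans hb)).2)

theorem setOf_count_top_eq_one_subset_range :
    {l : IntPartition | l.1.count ⊤ = 1} ⊆
      range fun lam : {lam : IntPartition // IsFinitePart lam} => consTop lam.1 := by
  rintro ⟨_ | ⟨v, L⟩, hsorted, hpos⟩ hcount <;> change List.count ⊤ _ = 1 at hcount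
  · simp at hcount
  have hv : v = ⊤ := by
    by_contra hv
    have hL : ⊤ ∈ L := List.count_pos_iff.1 (by simp_all)
    exact hv (top_le_iff.1 ((List.pairwise_cons.1 hsorted).1 ⊤ hL))
  subst hv
  have hL : ⊤ ∉ L := List.count_eq_zero.1 (by simpa [List.count_cons] using hcount)
  exact ⟨⟨⟨L, (List.pairwise_cons.1 hsorted).2, fun x hx => hpos x (List.mem_cons_of_mem _ hx)⟩,
    fun x hx hxt => hL (hxt ▸ hx)⟩, rfl⟩

theorem setOf_trunc_eq_inter_count_top {lam : IntPartition} (hlam : IsFinitePart lam) {K : ℕ}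
    (hK : ∀ x ∈ lam.1, x < K) :
    {m : IntPartition | trunc m K = (K : ℕ∞) :: lam.1} ∩ {l | l.1.count ⊤ = 1}
      = consSet ⊤ lam ∩ {l | l.1.count ⊤ = 1} := by
  ext m
  simp only [mem_inter_iff, mem_ofPred_eq, trunc_eq_cons_iff hK, consSet]
  constructor
  · rintro ⟨⟨v, -, hv⟩, hcount⟩
    refine ⟨?_, hcount⟩
    rw [hv, List.count_cons, List.count_eq_zero.2 fun h => hlam ⊤ h rfl] at hcount
    rw [hv, show v = ⊤ by simpa using hcount]
  · rintro ⟨hm, hcount⟩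
    exact ⟨⟨⊤, le_top, hm⟩, hcount⟩

theorem setOf_trunc_eq_inter_sum_eq {lam : IntPartition} (hlam : IsFinitePart lam) {K n : ℕ}
    (hK : ∀ x ∈ lam.1, x < K) (hn : lam.1.sum + K ≤ n) :
    {m : IntPartition | trunc m K = (K : ℕ∞) :: lam.1} ∩ {l | IsFinitePart l ∧ l.1.sum = n}
      = consSet (n - lam.1.sum) lam ∩ {l | IsFinitePart l ∧ l.1.sum = n} := by
  have hcancel := ENat.addLECancellable_of_ne_top hlam.sum_ne_top
  ext m
  simp only [mem_inter_iff, mem_ofPred_eq, trunc_eq_cons_iff hK, consSet]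
  constructor
  · rintro ⟨⟨v, -, hv⟩, hfin, hsum⟩
    refine ⟨?_, hfin, hsum⟩
    rw [hv, List.sum_cons] at hsum
    rw [hv, hcancel.eq_tsub_of_add_eq hsum]
  · rintro ⟨hm, hfin, hsum⟩
    exact ⟨⟨_, hcancel.le_tsub_of_add_le_left hn, hm⟩, hfin, hsum⟩

section Metric

variable [MetricSpace IntPartition] (hdist : ∀ a b : IntPartition, dist a b = dP a b)
include hdist

theorem dist_lt_exp_neg_iff (l m : IntPartition) (K : ℕ) :
    dist l m < Real.exp (-K) ↔ trunc l K = trunc m K := by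
  rw [hdist, dP]
  split_ifs with hS
  · simpa [Real.exp_pos] using (Set.ext_iff.1 hS K).1
  · rw [Real.exp_lt_exp, neg_lt_neg_iff, Nat.cast_lt]
    constructor
    · intro hK
      by_contra hne
      exact (Nat.sInf_le hne).not_gt hK
    · intro hK
      by_contra! hle
      exact Nat.sInf_mem (nonempty_iff_ne_empty.2 hS) (trunc_eq_of_le hle hK)

theorem isClopen_setOf_trunc_eq (K : ℕ) (c : List ℕ∞) :
    IsClopen {m : IntPartition | trunc m K = c} :=
  IsLocallyConstant.isClopen_fiber ((IsLocallyConstant.iff_eventually_eq _).2 fun a =>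
    Filter.mem_of_superset (Metric.ball_mem_nhds a (Real.exp_pos (-K))) fun m hm =>
      (dist_lt_exp_neg_iff hdist m a K).1 hm) c

theorem tendsto_setOf_trunc_eq_smallSets (a : IntPartition) :
    Tendsto (fun K : ℕ => {m | trunc m K = trunc a K}) atTop (𝓝 a).smallSets := by
  refine tendsto_smallSets_iff.2 fun U hU => ?_
  obtain ⟨ε, hε, hball⟩ := Metric.mem_nhds_iff.1 hU
  have hexp : Tendsto (fun K : ℕ => Real.exp (-K)) atTop (𝓝 0) :=
    Real.tendsto_exp_neg_atTop_nhds_zero.comp tendsto_natCast_atTop_atTop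
  filter_upwards [hexp.eventually (gt_mem_nhds hε)] with K hK m hm
  exact hball (((dist_lt_exp_neg_iff hdist m a K).2 hm).trans hK)

theorem tendsto_consSet_smallSets {lam : IntPartition} (hlam : IsFinitePart lam) :
    Tendsto (fun n : ℕ => consSet (n - lam.1.sum) lam) atTop (𝓝 (consTop lam)).smallSets := by
  refine tendsto_smallSets_iff.2 fun U hU => ?_
  obtain ⟨K, hKU, hK⟩ := ((tendsto_smallSets_iff.1
    (tendsto_setOf_trunc_eq_smallSets hdist (consTop lam)) U hU).and hlam.eventually_lt).exists
  filter_upwards [hlam.eventually_sum_add_le K] with n hn l hl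
  refine hKU ?_
  change trunc l K = trunc (consTop lam) K
  rw [(trunc_eq_cons_iff (m := consTop lam) hK).2 ⟨⊤, le_top, rfl⟩, trunc_eq_cons_iff hK]
  exact ⟨_, (ENat.addLECancellable_of_ne_top hlam.sum_ne_top).le_tsub_of_add_le_left hn, hl⟩

theorem tendsto_measure_consSet_of_tendsto_integral {q : ℕ → Measure IntPartition}
    {qinf : Measure IntPartition}
    (hsupp : ∀ᶠ n in atTop, q n {l : IntPartition | IsFinitePart l ∧ l.1.sum = n}ᶜ = 0)
    (hsuppinf : qinf {l : IntPartition | l.1.count ⊤ = 1}ᶜ = 0)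
    (hweak : ∀ f : BoundedContinuousFunction IntPartition ℝ,
      Tendsto (fun n => ∫ x, f x ∂(q n)) atTop (𝓝 (∫ x, f x ∂qinf)))
    {lam : IntPartition} (hlam : IsFinitePart lam) :
    Tendsto (fun n : ℕ => (q n (consSet (n - lam.1.sum) lam)).toReal) atTop
      (𝓝 (qinf (consSet ⊤ lam)).toReal) := by
  obtain ⟨K, hK⟩ := hlam.eventually_lt.exists
  have hlim := hweak (.indicator _ (isClopen_setOf_trunc_eq hdist K ((K : ℕ∞) :: lam.1)))
  simp only [BoundedContinuousFunction.indicator_apply,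
    integral_indicator_one MeasurableSet.of_discrete, measureReal_def] at hlim
  rw [← measure_inter_conull hsuppinf, setOf_trunc_eq_inter_count_top hlam hK,
    measure_inter_conull hsuppinf] at hlim
  refine hlim.congr' ?_
  filter_upwards [hsupp, hlam.eventually_sum_add_le K] with n hsupp_n hn
  rw [← measure_inter_conull hsupp_n, setOf_trunc_eq_inter_sum_eq hlam hK hn,
    measure_inter_conull hsupp_n]

end Metric

/-- Weak convergence (with respect to the topology of `d_𝒫`) of probability measures
`q_n` supported by `𝒫_n` towards a probability measure `q_∞` charging only partitions
with a single infinite part holds if and only if, for every finite partition `λ`,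
`q_n({(n−‖λ‖, λ)}) → q_∞({(∞, λ)})`.  Here `(v, λ)` is the partition whose list of
parts is `v` followed by the parts of `λ` (for `n ≥ ‖λ‖ + λ₁` this is the
non-increasing rearrangement; for smaller `n` the corresponding singleton is empty,
which does not affect the limit). -/
theorem weak_convergence_iff [inst : MetricSpace IntPartition]
    (hdist : ∀ a b : IntPartition, dist a b = dP a b)
    (q : ℕ → Measure IntPartition) (qinf : Measure IntPartition)
    [∀ n, IsProbabilityMeasure (q n)] [IsProbabilityMeasure qinf]
    (hsupp : ∀ n : ℕ, 1 ≤ n →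
      q n {l : IntPartition | IsFinitePart l ∧ l.1.sum = (n : ℕ∞)} = 1)
    (hsuppinf : qinf {l : IntPartition | l.1.count (⊤ : ℕ∞) = 1} = 1) :
    (∀ f : BoundedContinuousFunction IntPartition ℝ,
        Tendsto (fun n => ∫ x, f x ∂(q n)) atTop (𝓝 (∫ x, f x ∂qinf)))
      ↔ (∀ lam : IntPartition, IsFinitePart lam →
          Tendsto
            (fun n => (q n {l : IntPartition | l.1 = ((n : ℕ∞) - lam.1.sum) :: lam.1}).toReal)
            atTop
            (𝓝 ((qinf {l : IntPartition | l.1 = (⊤ : ℕ∞) :: lam.1}).toReal))) := by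
  have hsuppinf_compl := (prob_compl_eq_zero_iff MeasurableSet.of_discrete).2 hsuppinf
  constructor
  · intro hweak lam hlam
    exact tendsto_measure_consSet_of_tendsto_integral hdist ((eventually_ge_atTop 1).mono
      fun n hn => (prob_compl_eq_zero_iff MeasurableSet.of_discrete).2 (hsupp n hn))
      hsuppinf_compl hweak hlam
  · intro hmass f
    refine tendsto_integral_of_tendsto_atoms
      (A := fun n lam => consSet ((n : ℕ∞) - lam.1.1.sum) lam.1)
      (consTop_injective.comp Subtype.val_injective)
      (measure_mono_null (compl_subset_compl.2 setOf_count_top_eq_one_subset_range) hsuppinf_compl)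
      (fun _ _ => MeasurableSet.of_discrete)
      (fun n => (pairwise_disjoint_consSet fun lam => (n : ℕ∞) - lam.1.sum).comp_of_injective
        Subtype.val_injective)
      (fun lam => tendsto_consSet_smallSets hdist lam.2) (fun lam => ?_) f
    rw [comp_apply, ← consSet_top]
    exact (ENNReal.tendsto_toReal_iff (fun _ => measure_ne_top _ _) (measure_ne_top _ _)).1
      (hmass lam.1 lam.2)

end IntPartition
end

section
/- Let (X_i)_{i≥1} and (Y_i)_{i≥1} be pointed weighted compact metric spaces such that the concatenations ⟨X_i ; i ≥ 1⟩ and ⟨Y_i ; i ≥ 1⟩ are both compact with finite total measure. Then d_GHP(⟨X_i ; i ≥ 1⟩, ⟨Y_i ; i ≥ 1⟩) ≤ Σ_{i≥1} d_GHP(X_i, Y_i). -/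
/- Statement 6: subadditivity of the GHP distance under concatenation. -/

open MeasureTheory Set Filter Topology
open scoped ENNReal NNReal

section GHP

variable {X Y : Type*}

/-- The total-variation norm `‖μ − ν‖_TV` of the difference of two finite Borel
measures, characterised as `sup_A (μ(A) − ν(A)) + sup_A (ν(A) − μ(A))` over
measurable sets `A`. -/
noncomputable def tvDist [MeasurableSpace X] (μ ν : Measure X) : ℝ :=
  sSup {r | ∃ A : Set X, MeasurableSet A ∧ r = (μ A).toReal - (ν A).toReal} +
  sSup {r | ∃ A : Set X, MeasurableSet A ∧ r = (ν A).toReal - (μ A).toReal}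

/-- A (pointed) correspondence between two pointed spaces: a measurable subset of
`X × Y` containing the pair of roots whose two projections are surjective. -/
def IsCorrespondence [MeasurableSpace X] [MeasurableSpace Y] (ρX : X) (ρY : Y)
    (C : Set (X × Y)) : Prop :=
  MeasurableSet C ∧ (ρX, ρY) ∈ C ∧ (∀ x : X, ∃ y : Y, (x, y) ∈ C) ∧
    (∀ y : Y, ∃ x : X, (x, y) ∈ C)

/-- The distortion of a correspondence. -/
noncomputable def distortion (dX : X → X → ℝ) (dY : Y → Y → ℝ) (C : Set (X × Y)) : ℝ :=
  sSup {r | ∃ p ∈ C, ∃ q ∈ C, r = |dX p.1 q.1 - dY p.2 q.2|}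

/-- The discrepancy `D(π; μX, μY)` of a measure `π` on `X × Y` with respect to `μX`
and `μY`. -/
noncomputable def discrepancy [MeasurableSpace X] [MeasurableSpace Y]
    (π : Measure (X × Y)) (μX : Measure X) (μY : Measure Y) : ℝ :=
  tvDist μX (π.map Prod.fst) + tvDist μY (π.map Prod.snd)

/-- The Gromov–Hausdorff–Prokhorov distance between two pointed weighted spaces,
given by their distance functions, roots and measures:
`d_GHP = inf { (dis C)/2 ∨ D(π;μX,μY) ∨ π(Cᶜ) }` over pointed correspondences `C`
and finite Borel measures `π` on `X × Y`. -/
noncomputable def dGHP [MeasurableSpace X] [MeasurableSpace Y]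
    (dX : X → X → ℝ) (ρX : X) (μX : Measure X)
    (dY : Y → Y → ℝ) (ρY : Y) (μY : Measure Y) : ℝ :=
  sInf {r | ∃ C : Set (X × Y), ∃ π : Measure (X × Y),
    IsCorrespondence ρX ρY C ∧ IsFiniteMeasure π ∧
    r = max (max (distortion dX dY C / 2) (discrepancy π μX μY)) ((π Cᶜ).toReal)}

/-- The closed ball of radius `r` around the root (the root is always included, so
that the restricted space is pointed even in degenerate cases). -/
def rootBall (dX : X → X → ℝ) (ρX : X) (r : ℝ) : Set X :=
  {x | dX ρX x ≤ r ∨ x = ρX}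

/-- The GHP distance between the closed balls of radius `r` around the roots,
each equipped with the restriction of the distance and of the measure. -/
noncomputable def ballGHP [MeasurableSpace X] [MeasurableSpace Y]
    (dX : X → X → ℝ) (ρX : X) (μX : Measure X)
    (dY : Y → Y → ℝ) (ρY : Y) (μY : Measure Y) (r : ℝ) : ℝ :=
  dGHP (fun a b : rootBall dX ρX r => dX a.1 b.1) ⟨ρX, Or.inr rfl⟩
      ((μX.restrict (rootBall dX ρX r)).comap Subtype.val)
    (fun a b : rootBall dY ρY r => dY a.1 b.1) ⟨ρY, Or.inr rfl⟩
      ((μY.restrict (rootBall dY ρY r)).comap Subtype.val)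

/-- The extended Gromov–Hausdorff–Prokhorov distance
`D_GHP(X,Y) = ∫_0^∞ e^{−r} (1 ∧ d_GHP(X|_r, Y|_r)) dr`. -/
noncomputable def DGHP [MeasurableSpace X] [MeasurableSpace Y]
    (dX : X → X → ℝ) (ρX : X) (μX : Measure X)
    (dY : Y → Y → ℝ) (ρY : Y) (μY : Measure Y) : ℝ :=
  ∫ r in Set.Ioi (0 : ℝ), Real.exp (-r) * min 1 (ballGHP dX ρX μX dY ρY μY r)

end GHP

/-- The carrier of the concatenation: a new root together with the disjoint union of
the `X i` (the metric identifies all the roots `ρ i` with the new root). -/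
abbrev Concat (X : ℕ → Type) : Type := Unit ⊕ (Σ i, X i)

/-- The (pseudo)distance of the concatenation `⟨X_i ; i⟩`. -/
noncomputable def concatDist (X : ℕ → Type) [∀ i, MetricSpace (X i)] (ρ : ∀ i, X i) :
    Concat X → Concat X → ℝ
  | Sum.inl _, Sum.inl _ => 0
  | Sum.inl _, Sum.inr ⟨i, x⟩ => dist (ρ i) x
  | Sum.inr ⟨i, x⟩, Sum.inl _ => dist (ρ i) x
  | Sum.inr ⟨i, x⟩, Sum.inr ⟨j, y⟩ =>
      if h : i = j then dist x (cast (congrArg X h.symm) y)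
      else dist (ρ i) x + dist (ρ j) y

/-- The measure of the concatenation: the sum of the measures `μ i` carried by the
pieces `X i`. -/
noncomputable def concatMeasure (X : ℕ → Type) [∀ i, MeasurableSpace (X i)]
    (μ : ∀ i, Measure (X i)) : Measure (Concat X) :=
  Measure.sum fun i => (μ i).map fun x => Sum.inr ⟨i, x⟩

/-- Sequential compactness with respect to a (pseudo)distance. -/
def SeqCompactDist {Z : Type*} (d : Z → Z → ℝ) : Prop :=
  ∀ u : ℕ → Z, ∃ x : Z, ∃ φ : ℕ → ℕ, StrictMono φ ∧
    Tendsto (fun n => d (u (φ n)) x) atTop (𝓝 0)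

/-! Glue near-optimal correspondences `C i` and measures `π i` between the pieces into the
correspondence `{(ρ, ρ)} ∪ ⋃ i, C i` and the measure `∑ i, π i` between the concatenations.
Points of different pieces are at distance `d(ρ_i, x) + d(ρ_j, y)` and `(ρ_i, ρ_i) ∈ C i`, so the
distortion of the glued correspondence is at most the sum of the distortions; the
total-variation discrepancies and the mass outside the correspondence are subadditive over the
pieces as well. Taking the `i`-th pair within `ε / 2 ^ (i + 1)` of optimal gives the bound up to
`ε`. -/

section TotalVariation

variable {Z : Type*} [MeasurableSpace Z]

noncomputable def tvExcess (μ ν : Measure Z) : ℝ :=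
  sSup {r | ∃ A : Set Z, MeasurableSet A ∧ r = (μ A).toReal - (ν A).toReal}

lemma tvDist_eq_tvExcess_add (μ ν : Measure Z) : tvDist μ ν = tvExcess μ ν + tvExcess ν μ :=
  rfl

lemma le_tvExcess (μ ν : Measure Z) [IsFiniteMeasure μ] {A : Set Z} (hA : MeasurableSet A) :
    (μ A).toReal - (ν A).toReal ≤ tvExcess μ ν := by
  refine le_csSup ⟨(μ univ).toReal, ?_⟩ ⟨A, hA, rfl⟩
  rintro r ⟨B, -, rfl⟩
  linarith [ENNReal.toReal_mono (measure_ne_top μ univ) (measure_mono (subset_univ B)),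
    ENNReal.toReal_nonneg (a := ν B)]

lemma tvExcess_nonneg (μ ν : Measure Z) [IsFiniteMeasure μ] : 0 ≤ tvExcess μ ν := by
  simpa using le_tvExcess μ ν MeasurableSet.empty

lemma tvExcess_le_tvDist (μ ν : Measure Z) [IsFiniteMeasure ν] : tvExcess μ ν ≤ tvDist μ ν :=
  le_add_of_nonneg_right (tvExcess_nonneg ν μ)

lemma tvExcess_swap_le_tvDist (μ ν : Measure Z) [IsFiniteMeasure μ] : tvExcess ν μ ≤ tvDist μ ν :=
  le_add_of_nonneg_left (tvExcess_nonneg μ ν)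

lemma tvDist_nonneg (μ ν : Measure Z) [IsFiniteMeasure μ] [IsFiniteMeasure ν] :
    0 ≤ tvDist μ ν :=
  add_nonneg (tvExcess_nonneg μ ν) (tvExcess_nonneg ν μ)

lemma measure_univ_le_add_tvDist (μ ν : Measure Z) [IsFiniteMeasure μ] [IsFiniteMeasure ν] :
    ν univ ≤ μ univ + ENNReal.ofReal (tvDist μ ν) := by
  have h := (le_tvExcess ν μ MeasurableSet.univ).trans (tvExcess_swap_le_tvDist μ ν)
  rw [← ENNReal.ofReal_toReal (measure_ne_top ν univ),
    ← ENNReal.ofReal_toReal (measure_ne_top μ univ),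
    ← ENNReal.ofReal_add ENNReal.toReal_nonneg (tvDist_nonneg μ ν)]
  exact ENNReal.ofReal_le_ofReal (by linarith)

lemma tvExcess_map_le {W : Type*} [MeasurableSpace W] {f : Z → W} (hf : Measurable f)
    (μ ν : Measure Z) [IsFiniteMeasure μ] : tvExcess (μ.map f) (ν.map f) ≤ tvExcess μ ν := by
  refine Real.sSup_le ?_ (tvExcess_nonneg μ ν)
  rintro r ⟨A, hA, rfl⟩
  rw [Measure.map_apply hf hA, Measure.map_apply hf hA]
  exact le_tvExcess μ ν (hf hA)

lemma tvDist_map_le {W : Type*} [MeasurableSpace W] {f : Z → W} (hf : Measurable f)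
    (μ ν : Measure Z) [IsFiniteMeasure μ] [IsFiniteMeasure ν] :
    tvDist (μ.map f) (ν.map f) ≤ tvDist μ ν :=
  add_le_add (tvExcess_map_le hf μ ν) (tvExcess_map_le hf ν μ)

lemma isFiniteMeasure_of_sum_univ_ne_top {ι : Type*} {μ : ι → Measure Z}
    (hμ : Measure.sum μ univ ≠ ⊤) (i : ι) : IsFiniteMeasure (μ i) :=
  ⟨(Measure.le_sum μ i univ).trans_lt hμ.lt_top⟩

lemma tvExcess_sum_le {ι : Type*} (μ ν : ι → Measure Z) (hμ : Measure.sum μ univ ≠ ⊤)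
    (hν : Measure.sum ν univ ≠ ⊤) (h : Summable fun i => tvExcess (μ i) (ν i)) :
    tvExcess (Measure.sum μ) (Measure.sum ν) ≤ ∑' i, tvExcess (μ i) (ν i) := by
  have := isFiniteMeasure_of_sum_univ_ne_top hμ
  refine Real.sSup_le ?_ (tsum_nonneg fun i => tvExcess_nonneg _ _)
  rintro r ⟨A, hA, rfl⟩
  have hμA : ∑' i, μ i A ≠ ⊤ := by
    rw [← Measure.sum_apply _ hA]; exact measure_ne_top_of_subset (subset_univ A) hμ
  have hνA : ∑' i, ν i A ≠ ⊤ := by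
    rw [← Measure.sum_apply _ hA]; exact measure_ne_top_of_subset (subset_univ A) hν
  rw [Measure.sum_apply _ hA, Measure.sum_apply _ hA, ENNReal.tsum_toReal_eq
    (ENNReal.ne_top_of_tsum_ne_top hμA), ENNReal.tsum_toReal_eq
    (ENNReal.ne_top_of_tsum_ne_top hνA), ← (ENNReal.summable_toReal hμA).tsum_sub
    (ENNReal.summable_toReal hνA)]
  exact ((ENNReal.summable_toReal hμA).sub (ENNReal.summable_toReal hνA)).tsum_le_tsum
    (fun i => le_tvExcess (μ i) (ν i) hA) h

lemma tvDist_sum_le {ι : Type*} (μ ν : ι → Measure Z) (hμ : Measure.sum μ univ ≠ ⊤)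
    (hν : Measure.sum ν univ ≠ ⊤) (h : Summable fun i => tvDist (μ i) (ν i)) :
    tvDist (Measure.sum μ) (Measure.sum ν) ≤ ∑' i, tvDist (μ i) (ν i) := by
  have := isFiniteMeasure_of_sum_univ_ne_top hμ
  have := isFiniteMeasure_of_sum_univ_ne_top hν
  have h₁ : Summable fun i => tvExcess (μ i) (ν i) :=
    .of_nonneg_of_le (fun i => tvExcess_nonneg _ _) (fun i => tvExcess_le_tvDist _ _) h
  have h₂ : Summable fun i => tvExcess (ν i) (μ i) :=
    .of_nonneg_of_le (fun i => tvExcess_nonneg _ _) (fun i => tvExcess_swap_le_tvDist _ _) h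
  simp only [tvDist_eq_tvExcess_add, h₁.tsum_add h₂]
  exact add_le_add (tvExcess_sum_le μ ν hμ hν h₁) (tvExcess_sum_le ν μ hν hμ h₂)

end TotalVariation

section Cost

variable {X Y : Type*} [MeasurableSpace X] [MeasurableSpace Y]

noncomputable def ghpCost (dX : X → X → ℝ) (dY : Y → Y → ℝ) (C : Set (X × Y))
    (π : Measure (X × Y)) (μX : Measure X) (μY : Measure Y) : ℝ :=
  max (max (distortion dX dY C / 2) (discrepancy π μX μY)) ((π Cᶜ).toReal)

variable {dX : X → X → ℝ} {dY : Y → Y → ℝ} {ρX : X} {ρY : Y} {μX : Measure X} {μY : Measure Y}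

lemma ghpCost_nonneg (C : Set (X × Y)) (π : Measure (X × Y)) :
    0 ≤ ghpCost dX dY C π μX μY :=
  ENNReal.toReal_nonneg.trans (le_max_right _ _)

lemma dGHP_le_ghpCost {C : Set (X × Y)} (hC : IsCorrespondence ρX ρY C)
    (π : Measure (X × Y)) [IsFiniteMeasure π] :
    dGHP dX ρX μX dY ρY μY ≤ ghpCost dX dY C π μX μY :=
  csInf_le ⟨0, by rintro r ⟨C, π, -, -, rfl⟩; exact ghpCost_nonneg C π⟩ ⟨C, π, hC, ‹_›, rfl⟩

lemma dGHP_nonneg : 0 ≤ dGHP dX ρX μX dY ρY μY :=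
  Real.sInf_nonneg <| by rintro r ⟨C, π, -, -, rfl⟩; exact ghpCost_nonneg C π

lemma exists_ghpCost_lt {δ : ℝ} (hδ : 0 < δ) :
    ∃ (C : Set (X × Y)) (π : Measure (X × Y)), IsCorrespondence ρX ρY C ∧
      IsFiniteMeasure π ∧ ghpCost dX dY C π μX μY < dGHP dX ρX μX dY ρY μY + δ := by
  have hne : IsCorrespondence ρX ρY univ :=
    ⟨.univ, mem_univ _, fun _ => ⟨ρY, mem_univ _⟩, fun _ => ⟨ρX, mem_univ _⟩⟩
  obtain ⟨_, ⟨C, π, hC, hπ, rfl⟩, hlt⟩ := Real.lt_sInf_add_pos (s := {r | ∃ C π,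
    IsCorrespondence ρX ρY C ∧ IsFiniteMeasure π ∧ r = ghpCost dX dY C π μX μY})
    ⟨_, univ, 0, hne, inferInstance, rfl⟩ hδ
  exact ⟨C, π, hC, hπ, hlt⟩

end Cost

section Distortion

variable {X Y : Type*} [PseudoMetricSpace X] [BoundedSpace X] [PseudoMetricSpace Y]
  [BoundedSpace Y] {C : Set (X × Y)}

lemma abs_dist_sub_dist_le_distortion {p q : X × Y} (hp : p ∈ C) (hq : q ∈ C) :
    |dist p.1 q.1 - dist p.2 q.2| ≤ distortion dist dist C := by
  refine le_csSup ⟨Metric.diam (univ : Set X) + Metric.diam (univ : Set Y), ?_⟩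
    ⟨p, hp, q, hq, rfl⟩
  rintro r ⟨p, -, q, -, rfl⟩
  have hX := Metric.dist_le_diam_of_mem (Bornology.isBounded_univ.2 ‹_›)
    (mem_univ p.1) (mem_univ q.1)
  have hY := Metric.dist_le_diam_of_mem (Bornology.isBounded_univ.2 ‹_›)
    (mem_univ p.2) (mem_univ q.2)
  rw [abs_sub_le_iff]
  constructor <;> linarith [dist_nonneg (x := p.1) (y := q.1), dist_nonneg (x := p.2) (y := q.2)]

lemma distortion_nonneg {ρX : X} {ρY : Y} (hρ : (ρX, ρY) ∈ C) : 0 ≤ distortion dist dist C :=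
  (abs_nonneg _).trans (abs_dist_sub_dist_le_distortion hρ hρ)

end Distortion

section Concat

def concatIncl (X : ℕ → Type) (i : ℕ) (x : X i) : Concat X :=
  Sum.inr ⟨i, x⟩

variable {X Y : ℕ → Type}

def concatCorr (C : ∀ i, Set (X i × Y i)) : Set (Concat X × Concat Y) :=
  {(Sum.inl (), Sum.inl ())} ∪ ⋃ i, Prod.map (concatIncl X i) (concatIncl Y i) '' C i

lemma mem_concatCorr {C : ∀ i, Set (X i × Y i)} {p : Concat X × Concat Y} :
    p ∈ concatCorr C ↔ p = (Sum.inl (), Sum.inl ()) ∨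
      ∃ i, ∃ z ∈ C i, Prod.map (concatIncl X i) (concatIncl Y i) z = p := by
  simp [concatCorr]

variable [∀ i, MetricSpace (X i)] [∀ i, MetricSpace (Y i)]
  {ρX : ∀ i, X i} {ρY : ∀ i, Y i}

@[simp] lemma concatDist_root_root : concatDist X ρX (Sum.inl ()) (Sum.inl ()) = 0 := rfl

@[simp] lemma concatDist_root_incl (i : ℕ) (x : X i) :
    concatDist X ρX (Sum.inl ()) (concatIncl X i x) = dist (ρX i) x := rfl

@[simp] lemma concatDist_incl_root (i : ℕ) (x : X i) :
    concatDist X ρX (concatIncl X i x) (Sum.inl ()) = dist (ρX i) x := rfl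

@[simp] lemma concatDist_incl_incl_self (i : ℕ) (x y : X i) :
    concatDist X ρX (concatIncl X i x) (concatIncl X i y) = dist x y := by
  simp [concatDist, concatIncl]

lemma concatDist_incl_incl_of_ne {i j : ℕ} (h : i ≠ j) (x : X i) (y : X j) :
    concatDist X ρX (concatIncl X i x) (concatIncl X j y) = dist (ρX i) x + dist (ρX j) y := by
  simp [concatDist, concatIncl, h]

variable [∀ i, BoundedSpace (X i)] [∀ i, BoundedSpace (Y i)] {C : ∀ i, Set (X i × Y i)}

lemma abs_concatDist_sub_le_tsum (hρ : ∀ i, (ρX i, ρY i) ∈ C i)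
    (hC : Summable fun i => distortion dist dist (C i)) {p q : Concat X × Concat Y}
    (hp : p ∈ concatCorr C) (hq : q ∈ concatCorr C) :
    |concatDist X ρX p.1 q.1 - concatDist Y ρY p.2 q.2| ≤ ∑' i, distortion dist dist (C i) := by
  have h0 i : 0 ≤ distortion dist dist (C i) := distortion_nonneg (hρ i)
  have h1 i : distortion dist dist (C i) ≤ ∑' k, distortion dist dist (C k) :=
    hC.le_tsum i fun k _ => h0 k
  have hroot {i} {z} (hz : z ∈ C i) : |dist (ρX i) z.1 - dist (ρY i) z.2| ≤ _ :=
    (abs_dist_sub_dist_le_distortion (hρ i) hz).trans (h1 i)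
  rcases mem_concatCorr.1 hp with rfl | ⟨i, z, hz, rfl⟩ <;>
    rcases mem_concatCorr.1 hq with rfl | ⟨j, w, hw, rfl⟩
  · simpa using tsum_nonneg h0
  · simpa using hroot hw
  · simpa using hroot hz
  obtain rfl | hij := eq_or_ne i j
  · simpa using (abs_dist_sub_dist_le_distortion hz hw).trans (h1 i)
  have h2 := hC.sum_le_tsum {i, j} fun k _ => h0 k
  rw [Finset.sum_pair hij] at h2
  simp only [Prod.map_fst, Prod.map_snd, concatDist_incl_incl_of_ne hij]
  calc _ = |(dist (ρX i) z.1 - dist (ρY i) z.2) + (dist (ρX j) w.1 - dist (ρY j) w.2)| := by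
        ring_nf
    _ ≤ _ := (abs_add_le _ _).trans ((add_le_add (abs_dist_sub_dist_le_distortion (hρ i) hz)
        (abs_dist_sub_dist_le_distortion (hρ j) hw)).trans h2)

lemma distortion_concatCorr_le_tsum (hρ : ∀ i, (ρX i, ρY i) ∈ C i)
    (hC : Summable fun i => distortion dist dist (C i)) :
    distortion (concatDist X ρX) (concatDist Y ρY) (concatCorr C) ≤
      ∑' i, distortion dist dist (C i) := by
  refine Real.sSup_le ?_ (tsum_nonneg fun i => distortion_nonneg (hρ i))
  rintro r ⟨p, hp, q, hq, rfl⟩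
  exact abs_concatDist_sub_le_tsum hρ hC hp hq

end Concat

section ConcatMeasure

lemma measurableEmbedding_inr {α β : Type*} [MeasurableSpace α] [MeasurableSpace β] :
    MeasurableEmbedding (Sum.inr : β → α ⊕ β) :=
  ⟨Sum.inr_injective, measurable_inr, fun _ hs => hs.inr_image⟩

lemma measurableEmbedding_sigmaMk {ι : Type*} {β : ι → Type*} [∀ i, MeasurableSpace (β i)]
    (i : ι) : MeasurableEmbedding (Sigma.mk i : β i → Sigma β) := by
  refine ⟨sigma_mk_injective, fun _ hs => MeasurableSpace.measurableSet_iInf.1 hs i,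
    fun s hs => MeasurableSpace.measurableSet_iInf.2 fun j => ?_⟩
  change MeasurableSet (Sigma.mk j ⁻¹' (Sigma.mk i '' s))
  obtain rfl | hji := eq_or_ne j i
  · rwa [sigma_mk_injective.preimage_image]
  · convert MeasurableSet.empty
    exact eq_empty_of_forall_notMem fun x ⟨y, _, h⟩ => hji (congrArg Sigma.fst h).symm

variable {X Y : ℕ → Type} [∀ i, MeasurableSpace (X i)] [∀ i, MeasurableSpace (Y i)]

lemma measurableEmbedding_concatIncl (i : ℕ) : MeasurableEmbedding (concatIncl X i) :=
  measurableEmbedding_inr.comp (measurableEmbedding_sigmaMk i)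

lemma concatMeasure_eq_sum_map (μ : ∀ i, Measure (X i)) :
    concatMeasure X μ = Measure.sum fun i => (μ i).map (concatIncl X i) :=
  rfl

lemma concatMeasure_univ (μ : ∀ i, Measure (X i)) :
    concatMeasure X μ univ = ∑' i, μ i univ := by
  simp [concatMeasure_eq_sum_map, (measurableEmbedding_concatIncl _).map_apply]

lemma tvDist_concatMeasure_le {μ ν : ∀ i, Measure (X i)} [∀ i, IsFiniteMeasure (μ i)]
    [∀ i, IsFiniteMeasure (ν i)] (hμ : concatMeasure X μ univ ≠ ⊤)
    (hν : concatMeasure X ν univ ≠ ⊤) (h : Summable fun i => tvDist (μ i) (ν i)) :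
    tvDist (concatMeasure X μ) (concatMeasure X ν) ≤ ∑' i, tvDist (μ i) (ν i) := by
  have hmap i : tvDist ((μ i).map (concatIncl X i)) ((ν i).map (concatIncl X i)) ≤
      tvDist (μ i) (ν i) := tvDist_map_le (measurableEmbedding_concatIncl i).measurable _ _
  have hmap0 i : 0 ≤ tvDist ((μ i).map (concatIncl X i)) ((ν i).map (concatIncl X i)) :=
    tvDist_nonneg _ _
  exact (tvDist_sum_le _ _ hμ hν (.of_nonneg_of_le hmap0 hmap h)).trans
    ((Summable.of_nonneg_of_le hmap0 hmap h).tsum_le_tsum hmap h)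

noncomputable def concatCoupling (π : ∀ i, Measure (X i × Y i)) :
    Measure (Concat X × Concat Y) :=
  Measure.sum fun i => (π i).map (Prod.map (concatIncl X i) (concatIncl Y i))

variable (π : ∀ i, Measure (X i × Y i))

lemma concatCoupling_map_fst :
    (concatCoupling π).map Prod.fst = concatMeasure X fun i => (π i).map Prod.fst := by
  have hmeas i := ((measurableEmbedding_concatIncl (X := X) i).prodMap
    (measurableEmbedding_concatIncl (X := Y) i)).measurable
  rw [concatCoupling, Measure.map_sum measurable_fst.aemeasurable, concatMeasure_eq_sum_map]
  congr 1 with i : 1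
  rw [Measure.map_map measurable_fst (hmeas i),
    Measure.map_map (measurableEmbedding_concatIncl i).measurable measurable_fst]
  rfl

lemma concatCoupling_map_snd :
    (concatCoupling π).map Prod.snd = concatMeasure Y fun i => (π i).map Prod.snd := by
  have hmeas i := ((measurableEmbedding_concatIncl (X := X) i).prodMap
    (measurableEmbedding_concatIncl (X := Y) i)).measurable
  rw [concatCoupling, Measure.map_sum measurable_snd.aemeasurable, concatMeasure_eq_sum_map]
  congr 1 with i : 1
  rw [Measure.map_map measurable_snd (hmeas i),
    Measure.map_map (measurableEmbedding_concatIncl i).measurable measurable_snd]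
  rfl

lemma concatCoupling_compl_concatCorr_le (C : ∀ i, Set (X i × Y i)) :
    concatCoupling π (concatCorr C)ᶜ ≤ ∑' i, π i (C i)ᶜ := by
  rw [concatCoupling, Measure.sum_apply_of_countable]
  refine ENNReal.tsum_le_tsum fun i => ?_
  rw [((measurableEmbedding_concatIncl i).prodMap (measurableEmbedding_concatIncl i)).map_apply]
  exact measure_mono fun z hz hzC => hz (Or.inr (mem_iUnion.2 ⟨i, z, hzC, rfl⟩))

end ConcatMeasure

section ConcatGHP

variable {X Y : ℕ → Type} [∀ i, MeasurableSpace (X i)] [∀ i, MeasurableSpace (Y i)]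
  {ρX : ∀ i, X i} {ρY : ∀ i, Y i} {C : ∀ i, Set (X i × Y i)}

lemma measurableSet_concatCorr (hC : ∀ i, MeasurableSet (C i)) :
    MeasurableSet (concatCorr C) := by
  have hroot : {((Sum.inl () : Concat X), (Sum.inl () : Concat Y))} =
      range Sum.inl ×ˢ range Sum.inl := by
    ext ⟨_ | _, _ | _⟩ <;> simp
  refine .union (hroot ▸ measurableSet_range_inl.prod measurableSet_range_inl) (.iUnion fun i => ?_)
  exact ((measurableEmbedding_concatIncl i).prodMap
    (measurableEmbedding_concatIncl i)).measurableSet_image.2 (hC i)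

lemma isCorrespondence_concatCorr (hC : ∀ i, IsCorrespondence (ρX i) (ρY i) (C i)) :
    IsCorrespondence (Sum.inl () : Concat X) (Sum.inl () : Concat Y) (concatCorr C) := by
  refine ⟨measurableSet_concatCorr fun i => (hC i).1, .inl rfl, ?_, ?_⟩
  · rintro (⟨⟩ | ⟨i, x⟩)
    · exact ⟨Sum.inl (), .inl rfl⟩
    · obtain ⟨y, hy⟩ := (hC i).2.2.1 x
      exact ⟨concatIncl Y i y, mem_concatCorr.2 (.inr ⟨i, (x, y), hy, rfl⟩)⟩
  · rintro (⟨⟩ | ⟨i, y⟩)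
    · exact ⟨Sum.inl (), .inl rfl⟩
    · obtain ⟨x, hx⟩ := (hC i).2.2.2 y
      exact ⟨concatIncl X i x, mem_concatCorr.2 (.inr ⟨i, (x, y), hx, rfl⟩)⟩

end ConcatGHP

section ConcatCoupling

variable {X Y : ℕ → Type} [∀ i, MeasurableSpace (X i)] [∀ i, MeasurableSpace (Y i)]
  {μX : ∀ i, Measure (X i)} {μY : ∀ i, Measure (Y i)} [∀ i, IsFiniteMeasure (μX i)]
  [∀ i, IsFiniteMeasure (μY i)] (π : ∀ i, Measure (X i × Y i)) [∀ i, IsFiniteMeasure (π i)]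

lemma isFiniteMeasure_concatCoupling (hμX : concatMeasure X μX univ ≠ ⊤)
    (h : Summable fun i => tvDist (μX i) ((π i).map Prod.fst)) :
    IsFiniteMeasure (concatCoupling π) := by
  have hfst : concatMeasure X (fun i => (π i).map Prod.fst) univ ≠ ⊤ := by
    rw [concatMeasure_univ]
    refine ne_top_of_le_ne_top ?_ (ENNReal.tsum_le_tsum fun i =>
      measure_univ_le_add_tvDist (μX i) ((π i).map Prod.fst))
    rw [ENNReal.tsum_add, ← concatMeasure_univ,
      ← ENNReal.ofReal_tsum_of_nonneg (fun i => tvDist_nonneg _ _) h]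
    exact ENNReal.add_ne_top.2 ⟨hμX, ENNReal.ofReal_ne_top⟩
  refine ⟨lt_top_iff_ne_top.2 ?_⟩
  rwa [← preimage_univ (f := Prod.fst), ← Measure.map_apply measurable_fst .univ,
    concatCoupling_map_fst]

lemma discrepancy_nonneg (i : ℕ) : 0 ≤ discrepancy (π i) (μX i) (μY i) :=
  add_nonneg (tvDist_nonneg _ _) (tvDist_nonneg _ _)

lemma discrepancy_concatCoupling_le [IsFiniteMeasure (concatCoupling π)]
    (hμX : concatMeasure X μX univ ≠ ⊤) (hμY : concatMeasure Y μY univ ≠ ⊤)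
    (h : Summable fun i => discrepancy (π i) (μX i) (μY i)) :
    discrepancy (concatCoupling π) (concatMeasure X μX) (concatMeasure Y μY) ≤
      ∑' i, discrepancy (π i) (μX i) (μY i) := by
  have hX : Summable fun i => tvDist (μX i) ((π i).map Prod.fst) :=
    .of_nonneg_of_le (fun i => tvDist_nonneg _ _)
      (fun i => le_add_of_nonneg_right (tvDist_nonneg _ _)) h
  have hY : Summable fun i => tvDist (μY i) ((π i).map Prod.snd) :=
    .of_nonneg_of_le (fun i => tvDist_nonneg _ _)
      (fun i => le_add_of_nonneg_left (tvDist_nonneg _ _)) h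
  have hfst := concatCoupling_map_fst π ▸ measure_ne_top ((concatCoupling π).map Prod.fst) univ
  have hsnd := concatCoupling_map_snd π ▸ measure_ne_top ((concatCoupling π).map Prod.snd) univ
  rw [discrepancy, concatCoupling_map_fst, concatCoupling_map_snd]
  simp only [discrepancy, hX.tsum_add hY]
  exact add_le_add (tvDist_concatMeasure_le hμX hfst hX) (tvDist_concatMeasure_le hμY hsnd hY)

variable [∀ i, MetricSpace (X i)] [∀ i, MetricSpace (Y i)] [∀ i, BoundedSpace (X i)]
  [∀ i, BoundedSpace (Y i)] {ρX : ∀ i, X i} {ρY : ∀ i, Y i} {C : ∀ i, Set (X i × Y i)}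

theorem dGHP_concat_le_tsum_ghpCost (hC : ∀ i, IsCorrespondence (ρX i) (ρY i) (C i))
    (hμX : concatMeasure X μX univ ≠ ⊤) (hμY : concatMeasure Y μY univ ≠ ⊤)
    (h : Summable fun i => ghpCost dist dist (C i) (π i) (μX i) (μY i)) :
    dGHP (concatDist X ρX) (Sum.inl ()) (concatMeasure X μX)
        (concatDist Y ρY) (Sum.inl ()) (concatMeasure Y μY) ≤
      ∑' i, ghpCost dist dist (C i) (π i) (μX i) (μY i) := by
  set c := fun i => ghpCost dist dist (C i) (π i) (μX i) (μY i)
  have hc0 i : 0 ≤ c i := ghpCost_nonneg _ _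
  have hdis i : distortion dist dist (C i) ≤ 2 * c i := by
    have : distortion dist dist (C i) / 2 ≤ c i := (le_max_left _ _).trans (le_max_left _ _)
    linarith
  have hdisc i : discrepancy (π i) (μX i) (μY i) ≤ c i := (le_max_right _ _).trans (le_max_left _ _)
  have hcompl i : (π i (C i)ᶜ).toReal ≤ c i := le_max_right _ _
  have hdiscS : Summable fun i => discrepancy (π i) (μX i) (μY i) :=
    .of_nonneg_of_le (discrepancy_nonneg π) hdisc h
  have := isFiniteMeasure_concatCoupling π hμX <| .of_nonneg_of_le (fun i => tvDist_nonneg _ _)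
    (fun i => le_add_of_nonneg_right (tvDist_nonneg _ _)) hdiscS
  refine (dGHP_le_ghpCost (isCorrespondence_concatCorr hC) (concatCoupling π)).trans
    (max_le (max_le ?_ ?_) ?_)
  · have hρ i := (hC i).2.1
    have hdisS : Summable fun i => distortion dist dist (C i) :=
      .of_nonneg_of_le (fun i => distortion_nonneg (hρ i)) hdis (h.mul_left 2)
    linarith [distortion_concatCorr_le_tsum hρ hdisS, hdisS.tsum_le_tsum hdis (h.mul_left 2),
      h.tsum_mul_left (2 : ℝ)]
  · exact (discrepancy_concatCoupling_le π hμX hμY hdiscS).trans (hdiscS.tsum_le_tsum hdisc h)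
  · refine ENNReal.toReal_le_of_le_ofReal (tsum_nonneg hc0)
      ((concatCoupling_compl_concatCorr_le π C).trans ?_)
    rw [ENNReal.ofReal_tsum_of_nonneg hc0 h]
    exact ENNReal.tsum_le_tsum fun i =>
      (ENNReal.le_ofReal_iff_toReal_le (measure_ne_top _ _) (hc0 i)).2 (hcompl i)

end ConcatCoupling

theorem dGHP_concat_le_tsum_general (X Y : ℕ → Type)
    [∀ i, MetricSpace (X i)] [∀ i, CompactSpace (X i)]
    [∀ i, MeasurableSpace (X i)]
    [∀ i, MetricSpace (Y i)] [∀ i, CompactSpace (Y i)]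
    [∀ i, MeasurableSpace (Y i)]
    (ρX : ∀ i, X i) (μX : ∀ i, Measure (X i)) [∀ i, IsFiniteMeasure (μX i)]
    (ρY : ∀ i, Y i) (μY : ∀ i, Measure (Y i)) [∀ i, IsFiniteMeasure (μY i)]
    (hXm : concatMeasure X μX Set.univ ≠ ⊤)
    (hYm : concatMeasure Y μY Set.univ ≠ ⊤) :
    ENNReal.ofReal
        (dGHP (concatDist X ρX) (Sum.inl ()) (concatMeasure X μX)
          (concatDist Y ρY) (Sum.inl ()) (concatMeasure Y μY))
      ≤ ∑' i, ENNReal.ofReal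
          (dGHP (fun a b : X i => dist a b) (ρX i) (μX i)
            (fun a b : Y i => dist a b) (ρY i) (μY i)) := by
  set d := fun i => dGHP (fun a b : X i => dist a b) (ρX i) (μX i)
    (fun a b : Y i => dist a b) (ρY i) (μY i)
  refine ENNReal.le_of_forall_pos_le_add fun ε hε hlt => ?_
  have hd : Summable d := (ENNReal.summable_toReal hlt.ne).congr fun i =>
    ENNReal.toReal_ofReal dGHP_nonneg
  have hδ : Summable fun i => (ε : ℝ) / 2 / 2 ^ i := summable_geometric_two' _
  choose C π hC hπ hcost using fun i =>
    exists_ghpCost_lt (dX := dist) (dY := dist) (ρX := ρX i) (ρY := ρY i) (μX := μX i)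
      (μY := μY i) (by positivity : 0 < (ε : ℝ) / 2 / 2 ^ i)
  have hc := Summable.of_nonneg_of_le (fun i => ghpCost_nonneg _ _)
    (fun i => (hcost i).le) (hd.add hδ)
  calc ENNReal.ofReal (dGHP (concatDist X ρX) (Sum.inl ()) (concatMeasure X μX)
          (concatDist Y ρY) (Sum.inl ()) (concatMeasure Y μY))
      ≤ ENNReal.ofReal (∑' i, d i + ε) := by
        refine ENNReal.ofReal_le_ofReal ((dGHP_concat_le_tsum_ghpCost π hC hXm hYm hc).trans ?_)
        rw [← tsum_geometric_two' (ε : ℝ), ← hd.tsum_add hδ]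
        exact hc.tsum_le_tsum (fun i => (hcost i).le) (hd.add hδ)
    _ = ∑' i, ENNReal.ofReal (d i) + ε := by
        rw [ENNReal.ofReal_add (tsum_nonneg fun _ => dGHP_nonneg) ε.coe_nonneg,
          ENNReal.ofReal_tsum_of_nonneg (fun _ => dGHP_nonneg) hd, ENNReal.ofReal_coe_nnreal]

theorem dGHP_concat_le_tsum (X Y : ℕ → Type)
    [∀ i, MetricSpace (X i)] [∀ i, CompactSpace (X i)]
    [∀ i, MeasurableSpace (X i)] [∀ i, BorelSpace (X i)]
    [∀ i, MetricSpace (Y i)] [∀ i, CompactSpace (Y i)]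
    [∀ i, MeasurableSpace (Y i)] [∀ i, BorelSpace (Y i)]
    (ρX : ∀ i, X i) (μX : ∀ i, Measure (X i)) [∀ i, IsFiniteMeasure (μX i)]
    (ρY : ∀ i, Y i) (μY : ∀ i, Measure (Y i)) [∀ i, IsFiniteMeasure (μY i)]
    (hXc : SeqCompactDist (concatDist X ρX))
    (hXm : concatMeasure X μX Set.univ ≠ ⊤)
    (hYc : SeqCompactDist (concatDist Y ρY))
    (hYm : concatMeasure Y μY Set.univ ≠ ⊤) :
    ENNReal.ofReal
        (dGHP (concatDist X ρX) (Sum.inl ()) (concatMeasure X μX)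
          (concatDist Y ρY) (Sum.inl ()) (concatMeasure Y μY))
      ≤ ∑' i, ENNReal.ofReal
          (dGHP (fun a b : X i => dist a b) (ρX i) (μX i)
            (fun a b : Y i => dist a b) (ρY i) (μY i)) :=
  dGHP_concat_le_tsum_general X Y ρX μX ρY μY hXm hYm
end

section
/- Let X be a nonnegative-integer-valued random variable such that n^{1+γ} P(X = n) → c as n → ∞, for some γ ∈ (0,1) and some constant c > 0. Then for every continuous function f: ℝ₊ → ℝ₊ with f(x) ≤ 1 ∧ x for all x, one has R·E[f(X/R^{1/γ})] → c·∫_0^∞ f(x) x^{−1−γ} dx as R → ∞. -/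
/-! With `a = R ^ (1 / γ)`, so that `R = a ^ γ`, put `q n = n ^ (1 + γ) P(X = n)` and
`g x = f x x ^ (-1 - γ)`. Then `R E[f (X / a)] = a ^ γ ∑ₙ P(X = n) f (n / a)` is exactly the
integral over `(0, ∞)` of the step function `x ↦ q ⌈a x⌉ g (⌈a x⌉ / a)`. As `a → ∞` it converges
pointwise to `c g x`, and since `⌈a x⌉ / a ≥ x` it is dominated by
`(sup q) min(x ^ (-γ), x ^ (-1 - γ))`, which is integrable because `0 < γ < 1`.
Dominated convergence concludes. -/

open MeasureTheory Filter Topology Set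

lemma nat_ceil_eq_add_one_iff {y : ℝ} {n : ℕ} : ⌈y⌉₊ = n + 1 ↔ y ∈ Ioc (n : ℝ) (n + 1) := by
  rw [Nat.ceil_eq_iff n.succ_ne_zero]
  simp

lemma iUnion_Ioc_natCast_add_one : ⋃ n : ℕ, Ioc (n : ℝ) (n + 1) = Ioi 0 := by
  ext y
  simp only [mem_iUnion, ← nat_ceil_eq_add_one_iff, mem_Ioi]
  rw [← Nat.ceil_pos]
  exact ⟨fun ⟨n, hn⟩ => hn ▸ n.succ_pos, fun h => ⟨_, (Nat.succ_pred_eq_of_pos h).symm⟩⟩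

lemma integrableOn_Ioi_min_rpow {s t : ℝ} (hs : -1 < s) (ht : t < -1) :
    IntegrableOn (fun x : ℝ => min (x ^ s) (x ^ t)) (Ioi 0) := by
  have hmeas : AEStronglyMeasurable (fun x : ℝ => min (x ^ s) (x ^ t)) :=
    ((measurable_id.pow_const s).min (measurable_id.pow_const t)).aestronglyMeasurable
  have hnorm (x : ℝ) (hx : 0 < x) : ‖min (x ^ s) (x ^ t)‖ = min (x ^ s) (x ^ t) :=
    Real.norm_of_nonneg (le_min (Real.rpow_nonneg hx.le s) (Real.rpow_nonneg hx.le t))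
  have hnear : IntegrableOn (fun x : ℝ => min (x ^ s) (x ^ t)) (Ioc 0 1) := by
    refine Integrable.mono' ((intervalIntegrable_iff_integrableOn_Ioc_of_le zero_le_one).1
      (intervalIntegral.intervalIntegrable_rpow' hs)) hmeas.restrict
      ((ae_restrict_iff' measurableSet_Ioc).2 (Eventually.of_forall fun x hx => ?_))
    rw [hnorm x hx.1]
    exact min_le_left _ _
  have hfar : IntegrableOn (fun x : ℝ => min (x ^ s) (x ^ t)) (Ioi 1) := by
    refine Integrable.mono' (integrableOn_Ioi_rpow_of_lt ht zero_lt_one) hmeas.restrict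
      ((ae_restrict_iff' measurableSet_Ioi).2 (Eventually.of_forall fun x (hx : 1 < x) => ?_))
    rw [hnorm x (zero_lt_one.trans hx)]
    exact min_le_right _ _
  simpa only [Ioc_union_Ioi_eq_Ioi zero_le_one] using hnear.union hfar

lemma antitoneOn_min_rpow {s t : ℝ} (hs : s ≤ 0) (ht : t ≤ 0) :
    AntitoneOn (fun x : ℝ => min (x ^ s) (x ^ t)) (Ioi 0) :=
  fun _ hx _ hy hxy => min_le_min (Real.antitoneOn_rpow_Ioi_of_exponent_nonpos hs hx hy hxy)
    (Real.antitoneOn_rpow_Ioi_of_exponent_nonpos ht hx hy hxy)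

lemma norm_mul_rpow_le_min_rpow {s t y : ℝ} (ht : 0 < t) (hy0 : 0 ≤ y) (hy : y ≤ min 1 t) :
    ‖y * t ^ (-1 - s)‖ ≤ min (t ^ (-s)) (t ^ (-1 - s)) := by
  have hpow : 0 ≤ t ^ (-1 - s) := Real.rpow_nonneg ht.le _
  rw [Real.norm_of_nonneg (mul_nonneg hy0 hpow)]
  refine le_min ?_ ?_
  · calc y * t ^ (-1 - s) ≤ t * t ^ (-1 - s) :=
          mul_le_mul_of_nonneg_right (hy.trans (min_le_right _ _)) hpow
      _ = t ^ (-s) := by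
          rw [mul_comm, ← Real.rpow_add_one ht.ne']
          ring_nf
  · simpa using mul_le_mul_of_nonneg_right (hy.trans (min_le_left _ _)) hpow

section

variable {E : Type*} [NormedAddCommGroup E] [NormedSpace ℝ E] [CompleteSpace E]

lemma integral_Ioi_nat_ceil (h : ℕ → E) (hint : IntegrableOn (fun y => h ⌈y⌉₊) (Ioi (0 : ℝ))) :
    ∫ y in Ioi (0 : ℝ), h ⌈y⌉₊ = ∑' n : ℕ, h (n + 1) := by
  have hd : Pairwise (Function.onFun Disjoint fun n : ℕ => Ioc (n : ℝ) (n + 1)) :=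
    fun m n hmn => disjoint_left.2 fun y hm hn => hmn <| Nat.succ_injective <|
      (nat_ceil_eq_add_one_iff.2 hm).symm.trans (nat_ceil_eq_add_one_iff.2 hn)
  rw [← iUnion_Ioc_natCast_add_one] at hint ⊢
  rw [integral_iUnion (fun _ => measurableSet_Ioc) hd hint]
  congr with n
  rw [setIntegral_congr_fun measurableSet_Ioc
    fun y hy => congrArg h (nat_ceil_eq_add_one_iff.2 hy), setIntegral_const]
  simp

lemma integral_Ioi_nat_ceil_mul {a : ℝ} (ha : 0 < a) (h : ℕ → E)
    (hint : IntegrableOn (fun x => h ⌈a * x⌉₊) (Ioi 0)) :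
    ∫ x in Ioi (0 : ℝ), h ⌈a * x⌉₊ = a⁻¹ • ∑' n : ℕ, h (n + 1) := by
  have hint' := (integrableOn_Ioi_comp_mul_left_iff (fun y => h ⌈y⌉₊) 0 ha).1 hint
  rw [mul_zero] at hint'
  rw [integral_comp_mul_left_Ioi (fun y => h ⌈y⌉₊) 0 ha, mul_zero, integral_Ioi_nat_ceil h hint']

lemma integral_comp_eq_tsum_measureReal {Ω α : Type*} [MeasurableSpace Ω] [MeasurableSpace α]
    [Countable α] [MeasurableSingletonClass α] {μ : Measure Ω} [IsFiniteMeasure μ]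
    {X : Ω → α} (hX : Measurable X) {φ : α → E} {C : ℝ} (hφ : ∀ i, ‖φ i‖ ≤ C) :
    ∫ ω, φ (X ω) ∂μ = ∑' i, μ.real {ω | X ω = i} • φ i := by
  have hint : Integrable φ (μ.map X) :=
    (integrable_const C).mono' StronglyMeasurable.of_discrete.aestronglyMeasurable
      (Eventually.of_forall hφ)
  rw [← integral_map hX.aemeasurable StronglyMeasurable.of_discrete.aestronglyMeasurable,
    integral_countable hint]
  congr with i
  rw [map_measureReal_apply hX (measurableSet_singleton i)]
  rfl

end

section LatticeApproximation

variable {q : ℕ → ℝ} {g B : ℝ → ℝ} {M a x : ℝ}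

lemma norm_nat_ceil_mul_le (hqM : ∀ n, ‖q n‖ ≤ M) (hgB : ∀ t, 0 < t → ‖g t‖ ≤ B t)
    (hB : AntitoneOn B (Ioi 0)) (ha : 0 < a) (hx : 0 < x) :
    ‖q ⌈a * x⌉₊ * g (⌈a * x⌉₊ / a)‖ ≤ M * B x := by
  have hxt : x ≤ ⌈a * x⌉₊ / a := (le_div_iff₀' ha).2 (Nat.le_ceil _)
  rw [norm_mul]
  exact mul_le_mul (hqM _) ((hgB _ (hx.trans_le hxt)).trans (hB hx (hx.trans_le hxt) hxt))
    (norm_nonneg _) ((norm_nonneg _).trans (hqM 0))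

lemma integrableOn_Ioi_nat_ceil_mul (hqM : ∀ n, ‖q n‖ ≤ M) (hgB : ∀ t, 0 < t → ‖g t‖ ≤ B t)
    (hB : AntitoneOn B (Ioi 0)) (hBint : IntegrableOn B (Ioi 0)) (ha : 0 < a) :
    IntegrableOn (fun x => q ⌈a * x⌉₊ * g (⌈a * x⌉₊ / a)) (Ioi 0) :=
  (hBint.const_mul M).mono'
    ((StronglyMeasurable.of_discrete (f := fun n : ℕ => q n * g (n / a))).comp_measurable
      (Nat.measurable_ceil.comp (measurable_const_mul a))).aestronglyMeasurable
    ((ae_restrict_iff' measurableSet_Ioi).2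
      (Eventually.of_forall fun _ hx => norm_nat_ceil_mul_le hqM hgB hB ha hx))

theorem tendsto_integral_Ioi_nat_ceil_mul {c : ℝ} (hq : Tendsto q atTop (𝓝 c))
    (hg : ContinuousOn g (Ioi 0)) (hgB : ∀ t, 0 < t → ‖g t‖ ≤ B t)
    (hB : AntitoneOn B (Ioi 0)) (hBint : IntegrableOn B (Ioi 0)) :
    Tendsto (fun a => ∫ x in Ioi 0, q ⌈a * x⌉₊ * g (⌈a * x⌉₊ / a)) atTop
      (𝓝 (c * ∫ x in Ioi 0, g x)) := by
  obtain ⟨M, hM⟩ := hq.norm.bddAbove_range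
  have hqM : ∀ n, ‖q n‖ ≤ M := fun n => hM ⟨n, rfl⟩
  rw [← integral_const_mul]
  refine tendsto_integral_filter_of_dominated_convergence (fun x => M * B x)
    ?_ ?_ (hBint.const_mul M) ?_
  · filter_upwards [eventually_gt_atTop 0] with a ha
    exact (integrableOn_Ioi_nat_ceil_mul hqM hgB hB hBint ha).aestronglyMeasurable
  · filter_upwards [eventually_gt_atTop 0] with a ha
    exact (ae_restrict_iff' measurableSet_Ioi).2
      (Eventually.of_forall fun _ hx => norm_nat_ceil_mul_le hqM hgB hB ha hx)
  · refine (ae_restrict_iff' measurableSet_Ioi).2 (Eventually.of_forall fun x hx => ?_)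
    have hceil : Tendsto (fun a : ℝ => ⌈a * x⌉₊) atTop atTop :=
      tendsto_nat_ceil_atTop.comp (tendsto_id.atTop_mul_const hx)
    have hratio : Tendsto (fun a : ℝ => (⌈a * x⌉₊ : ℝ) / a) atTop (𝓝 x) :=
      (tendsto_nat_ceil_mul_div_atTop (le_of_lt hx)).congr fun a => by rw [mul_comm]
    exact (hq.comp hceil).mul ((hg.continuousAt (isOpen_Ioi.mem_nhds hx)).tendsto.comp hratio)

end LatticeApproximation

lemma rpow_one_add_mul_div_rpow_neg_one_sub {s m a : ℝ} (hm : 0 < m) (ha : 0 < a) :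
    m ^ (1 + s) * (m / a) ^ (-1 - s) = a * a ^ s := by
  rw [show -1 - s = -(1 + s) by ring, Real.rpow_neg (div_pos hm ha).le,
    Real.div_rpow hm.le ha.le, Real.rpow_add ha, Real.rpow_one]
  have : m ^ (1 + s) ≠ 0 := (Real.rpow_pos_of_pos hm _).ne'
  field_simp

lemma integral_Ioi_nat_ceil_rpow_mul_eq {s a : ℝ} (ha : 0 < a) (p : ℕ → ℝ) {f : ℝ → ℝ}
    (hf0 : f 0 = 0)
    (hint : IntegrableOn (fun x => ((⌈a * x⌉₊ : ℝ) ^ (1 + s) * p ⌈a * x⌉₊) *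
      (f (⌈a * x⌉₊ / a) * (⌈a * x⌉₊ / a) ^ (-1 - s))) (Ioi 0)) :
    ∫ x in Ioi 0, ((⌈a * x⌉₊ : ℝ) ^ (1 + s) * p ⌈a * x⌉₊) *
      (f (⌈a * x⌉₊ / a) * (⌈a * x⌉₊ / a) ^ (-1 - s)) = a ^ s * ∑' n, p n * f (n / a) := by
  have hshift : ∑' n : ℕ, p (n + 1) * f ((n + 1 : ℕ) / a) = ∑' n, p n * f (n / a) :=
    Nat.succ_injective.tsum_eq (f := fun n => p n * f (n / a)) fun n hn => by
      cases n with
      | zero => simp [hf0] at hn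
      | succ n => exact ⟨n, rfl⟩
  rw [integral_Ioi_nat_ceil_mul ha (fun n => ((n : ℝ) ^ (1 + s) * p n) *
    (f (n / a) * (n / a) ^ (-1 - s))) hint, ← hshift, smul_eq_mul, ← tsum_mul_left,
    ← tsum_mul_left]
  congr with n
  have key := rpow_one_add_mul_div_rpow_neg_one_sub (s := s) (Nat.cast_pos.2 n.succ_pos) ha
  calc a⁻¹ * (((n + 1 : ℕ) : ℝ) ^ (1 + s) * p (n + 1) *
        (f ((n + 1 : ℕ) / a) * ((n + 1 : ℕ) / a) ^ (-1 - s)))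
      = a⁻¹ * (((n + 1 : ℕ) : ℝ) ^ (1 + s) * ((n + 1 : ℕ) / a) ^ (-1 - s)) *
        (p (n + 1) * f ((n + 1 : ℕ) / a)) := by ring
    _ = a ^ s * (p (n + 1) * f ((n + 1 : ℕ) / a)) := by
        rw [key, inv_mul_cancel_left₀ ha.ne']

lemma rpow_mul_integral_div_eq_integral_Ioi_nat_ceil {Ω : Type*} [MeasurableSpace Ω]
    {μ : Measure Ω} [IsFiniteMeasure μ] {X : Ω → ℕ} (hX : Measurable X) {s a : ℝ} (ha : 0 < a)
    {f : ℝ → ℝ} (hf0 : f 0 = 0) (hf1 : ∀ t, 0 ≤ t → ‖f t‖ ≤ 1)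
    (hint : IntegrableOn (fun x => ((⌈a * x⌉₊ : ℝ) ^ (1 + s) * μ.real {ω | X ω = ⌈a * x⌉₊}) *
      (f (⌈a * x⌉₊ / a) * (⌈a * x⌉₊ / a) ^ (-1 - s))) (Ioi 0)) :
    a ^ s * ∫ ω, f (X ω / a) ∂μ = ∫ x in Ioi 0, ((⌈a * x⌉₊ : ℝ) ^ (1 + s) *
      μ.real {ω | X ω = ⌈a * x⌉₊}) * (f (⌈a * x⌉₊ / a) * (⌈a * x⌉₊ / a) ^ (-1 - s)) := by
  rw [integral_comp_eq_tsum_measureReal hX (φ := fun n : ℕ => f (n / a))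
    fun n => hf1 _ (by positivity)]
  exact (integral_Ioi_nat_ceil_rpow_mul_eq ha (fun n => μ.real {ω | X ω = n}) hf0 hint).symm

theorem scaling_limit_of_regular_tail_general {Ω : Type} [MeasurableSpace Ω]
    (μ : Measure Ω) [IsProbabilityMeasure μ] (X : Ω → ℕ) (hX : Measurable X)
    (γ c : ℝ) (hγ0 : 0 < γ) (hγ1 : γ < 1)
    (htail : Tendsto (fun n : ℕ => (n : ℝ) ^ (1 + γ) * (μ {ω | X ω = n}).toReal)
      atTop (𝓝 c))
    (f : ℝ → ℝ) (hf : ContinuousOn f (Set.Ici 0))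
    (hf0 : ∀ x : ℝ, 0 ≤ x → 0 ≤ f x)
    (hfb : ∀ x : ℝ, 0 ≤ x → f x ≤ min 1 x) :
    Tendsto (fun R : ℝ => R * ∫ ω, f ((X ω : ℝ) / R ^ (1 / γ)) ∂μ) atTop
      (𝓝 (c * ∫ x in Set.Ioi (0 : ℝ), f x * x ^ (-1 - γ))) := by
  have hf00 : f 0 = 0 := le_antisymm (by simpa using hfb 0 le_rfl) (hf0 0 le_rfl)
  have hf1 (t : ℝ) (ht : 0 ≤ t) : ‖f t‖ ≤ 1 :=
    (Real.norm_of_nonneg (hf0 t ht)).trans_le ((hfb t ht).trans (min_le_left _ _))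
  have hgB (t : ℝ) (ht : 0 < t) : ‖f t * t ^ (-1 - γ)‖ ≤ min (t ^ (-γ)) (t ^ (-1 - γ)) :=
    norm_mul_rpow_le_min_rpow ht (hf0 t ht.le) (hfb t ht.le)
  have hB := antitoneOn_min_rpow (s := -γ) (t := -1 - γ) (by linarith) (by linarith)
  have hBint := integrableOn_Ioi_min_rpow (s := -γ) (t := -1 - γ) (by linarith) (by linarith)
  have hg : ContinuousOn (fun t : ℝ => f t * t ^ (-1 - γ)) (Ioi 0) :=
    (hf.mono Ioi_subset_Ici_self).mul (continuousOn_id.rpow_const fun t ht => Or.inl ht.ne')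
  obtain ⟨M, hM⟩ := htail.norm.bddAbove_range
  have hlim : Tendsto (fun a : ℝ => a ^ γ * ∫ ω, f ((X ω : ℝ) / a) ∂μ) atTop
      (𝓝 (c * ∫ x in Ioi (0 : ℝ), f x * x ^ (-1 - γ))) := by
    refine (tendsto_integral_Ioi_nat_ceil_mul htail hg hgB hB hBint).congr' ?_
    filter_upwards [eventually_gt_atTop 0] with a ha
    exact (rpow_mul_integral_div_eq_integral_Ioi_nat_ceil hX ha hf00 hf1
      (integrableOn_Ioi_nat_ceil_mul (fun n => hM ⟨n, rfl⟩) hgB hB hBint ha)).symm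
  refine (hlim.comp (tendsto_rpow_atTop (one_div_pos.2 hγ0))).congr' ?_
  filter_upwards [eventually_gt_atTop 0] with R hR
  rw [Function.comp_apply, ← Real.rpow_mul hR.le, one_div_mul_cancel hγ0.ne', Real.rpow_one]

theorem scaling_limit_of_regular_tail {Ω : Type} [MeasurableSpace Ω]
    (μ : Measure Ω) [IsProbabilityMeasure μ] (X : Ω → ℕ) (hX : Measurable X)
    (γ c : ℝ) (hγ0 : 0 < γ) (hγ1 : γ < 1) (hc : 0 < c)
    (htail : Tendsto (fun n : ℕ => (n : ℝ) ^ (1 + γ) * (μ {ω | X ω = n}).toReal)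
      atTop (𝓝 c))
    (f : ℝ → ℝ) (hf : ContinuousOn f (Set.Ici 0))
    (hf0 : ∀ x : ℝ, 0 ≤ x → 0 ≤ f x)
    (hfb : ∀ x : ℝ, 0 ≤ x → f x ≤ min 1 x) :
    Tendsto (fun R : ℝ => R * ∫ ω, f ((X ω : ℝ) / R ^ (1 / γ)) ∂μ) atTop
      (𝓝 (c * ∫ x in Set.Ioi (0 : ℝ), f x * x ^ (-1 - γ))) :=
  scaling_limit_of_regular_tail_general μ X hX γ c hγ0 hγ1 htail f hf hf0 hfb
end

section
/- Fix β ∈ (−2, −1) and for n ≥ 2 set Z_n = Σ_{k=1}^{n−1} [Γ(n−k+1+β)/(n−k)!] · [Γ(k+1+β)/k!]. Then n^{−β} Z_n → 2·Γ(2+β)/(−1−β) as n → ∞. -/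
/-!
Write `a c n = Γ(n + 1 + c) / n!`. Then `Z_n = ∑_{i+j=n} a β i * a β j - 2 a β 0 * a β n`.
Euler's limit formula gives `n^(-c) a c n → 1` for every real `c` (first for `c > 0`, then
downwards via `a (c + 1) n = (n + 1 + c) a c n`), so the boundary term contributes
`-2 Γ(1 + β) = 2 Γ(2 + β) / (-1 - β)`. The self-convolution of `a β` obeys the same first-order
recurrence as `a (1 + 2β)`, hence is `O(n^(1 + 2β)) = o(n^β)` since `β < -1`.
-/

open Filter Topology Finset
open scoped Nat

noncomputable def gammaDivFactorial (c : ℝ) (n : ℕ) : ℝ := Real.Gamma (n + 1 + c) / n !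

theorem succ_mul_gammaDivFactorial_succ (c : ℝ) (n : ℕ) :
    ((n : ℝ) + 1) * gammaDivFactorial c (n + 1) = gammaDivFactorial (c + 1) n := by
  rw [gammaDivFactorial, gammaDivFactorial, Nat.factorial_succ]
  push_cast
  field_simp
  ring_nf

theorem gammaDivFactorial_add_one {c : ℝ} {n : ℕ} (h : (n : ℝ) + 1 + c ≠ 0) :
    gammaDivFactorial (c + 1) n = ((n : ℝ) + 1 + c) * gammaDivFactorial c n := by
  rw [gammaDivFactorial, gammaDivFactorial, ← add_assoc, Real.Gamma_add_one h, mul_div_assoc]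

theorem prod_range_add_mul_Gamma {s : ℝ} (hs : ∀ j : ℕ, s + j ≠ 0) (n : ℕ) :
    (∏ j ∈ range n, (s + j)) * Real.Gamma s = Real.Gamma (s + n) := by
  induction n with
  | zero => simp
  | succ n ih =>
    rw [prod_range_succ, mul_right_comm, ih, Nat.cast_succ, ← add_assoc, Real.Gamma_add_one (hs n)]
    ring

theorem tendsto_rpow_neg_mul_gammaDivFactorial_of_pos {s : ℝ} (hs : 0 < s) :
    Tendsto (fun n : ℕ ↦ (n : ℝ) ^ (-s) * gammaDivFactorial s n) atTop (𝓝 1) := by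
  have hΓ : Real.Gamma s ≠ 0 := (Real.Gamma_pos_of_pos hs).ne'
  have h := (Real.GammaSeq_tendsto_Gamma s).inv₀ hΓ |>.const_mul (Real.Gamma s)
  rw [mul_inv_cancel₀ hΓ] at h
  refine h.congr' ?_
  filter_upwards [eventually_gt_atTop 0] with n hn
  have hn : (0 : ℝ) < n := by exact_mod_cast hn
  have hprod := prod_range_add_mul_Gamma (fun j ↦ by positivity) (n + 1)
  rw [Real.GammaSeq, gammaDivFactorial, Real.rpow_neg hn.le,
    show (n : ℝ) + 1 + s = s + (n + 1 : ℕ) by push_cast; ring, ← hprod]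
  have : (0 : ℝ) < ∏ j ∈ range (n + 1), (s + j) := prod_pos fun j _ ↦ by positivity
  field_simp

theorem tendsto_rpow_neg_mul_gammaDivFactorial_of_add_one {c : ℝ}
    (h : Tendsto (fun n : ℕ ↦ (n : ℝ) ^ (-(c + 1)) * gammaDivFactorial (c + 1) n) atTop (𝓝 1)) :
    Tendsto (fun n : ℕ ↦ (n : ℝ) ^ (-c) * gammaDivFactorial c n) atTop (𝓝 1) := by
  have h' := h.mul (tendsto_natCast_div_add_atTop (1 + c))
  rw [mul_one] at h'
  refine h'.congr' ?_
  filter_upwards [eventually_gt_atTop 0,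
    tendsto_natCast_atTop_atTop.eventually_gt_atTop (-(1 + c))] with n hn hc
  have hn : (0 : ℝ) < n := by exact_mod_cast hn
  have hc : (n : ℝ) + 1 + c ≠ 0 := by linarith
  rw [gammaDivFactorial_add_one hc, neg_add, Real.rpow_add hn, Real.rpow_neg_one, ← add_assoc]
  field_simp

theorem tendsto_rpow_neg_mul_gammaDivFactorial (c : ℝ) :
    Tendsto (fun n : ℕ ↦ (n : ℝ) ^ (-c) * gammaDivFactorial c n) atTop (𝓝 1) := by
  obtain ⟨m, hm⟩ := exists_nat_gt (-c)
  induction m generalizing c with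
  | zero => exact tendsto_rpow_neg_mul_gammaDivFactorial_of_pos (by simpa using hm)
  | succ m ih =>
    exact tendsto_rpow_neg_mul_gammaDivFactorial_of_add_one
      (ih (c + 1) (by push_cast at hm; linarith))

theorem Finset.Nat.succ_mul_sum_antidiagonal_succ {R : Type*} [CommSemiring R] {a b : ℕ → R}
    {β γ : R}
    (ha : ∀ n : ℕ, ((n : R) + 1) * a (n + 1) = ((n : R) + 1 + β) * a n)
    (hb : ∀ n : ℕ, ((n : R) + 1) * b (n + 1) = ((n : R) + 1 + γ) * b n) (n : ℕ) :
    ((n : R) + 1) * ∑ p ∈ antidiagonal (n + 1), a p.1 * b p.2 =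
      ((n : R) + 2 + β + γ) * ∑ p ∈ antidiagonal n, a p.1 * b p.2 := by
  have hsplit : ((n : R) + 1) * ∑ p ∈ antidiagonal (n + 1), a p.1 * b p.2 =
      ∑ p ∈ antidiagonal (n + 1), (p.1 : R) * a p.1 * b p.2 +
        ∑ p ∈ antidiagonal (n + 1), a p.1 * ((p.2 : R) * b p.2) := by
    rw [mul_sum, ← sum_add_distrib]
    refine sum_congr rfl fun p hp ↦ ?_
    rw [show (n : R) + 1 = ((p.1 + p.2 : ℕ) : R) by rw [mem_antidiagonal.mp hp]; push_cast; ring]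
    push_cast
    ring
  rw [hsplit, Finset.Nat.sum_antidiagonal_succ, Finset.Nat.sum_antidiagonal_succ', mul_sum]
  simp only [Nat.cast_zero, zero_mul, mul_zero, zero_add, Nat.cast_succ, ha, hb, ← sum_add_distrib]
  refine sum_congr rfl fun p hp ↦ ?_
  rw [← mem_antidiagonal.mp hp]
  push_cast
  ring

theorem mul_eq_mul_of_succ_mul_eq {K : Type*} [Field K] [CharZero K] {u v r : ℕ → K} {N : ℕ}
    (hu : ∀ n ≥ N, ((n : K) + 1) * u (n + 1) = r n * u n)
    (hv : ∀ n ≥ N, ((n : K) + 1) * v (n + 1) = r n * v n) :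
    ∀ n ≥ N, u n * v N = u N * v n := by
  intro n hn
  induction n, hn using Nat.le_induction with
  | base => ring
  | succ n hn ih =>
    have h : (n : K) + 1 ≠ 0 := by exact_mod_cast n.succ_ne_zero
    apply mul_left_cancel₀ h
    linear_combination v N * hu n hn - u N * hv n hn + r n * ih

theorem sum_Icc_eq_sum_antidiagonal_sub {M : Type*} [AddCommGroup M] (f : ℕ → ℕ → M) {n : ℕ}
    (hn : 1 ≤ n) :
    ∑ k ∈ Icc 1 (n - 1), f k (n - k) = ∑ p ∈ antidiagonal n, f p.1 p.2 - f 0 n - f n 0 := by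
  obtain ⟨m, rfl⟩ := Nat.exists_eq_add_of_le' hn
  rw [Finset.Nat.sum_antidiagonal_eq_sum_range_succ f, sum_range_succ, sum_range_succ',
    Nat.add_sub_cancel, ← Finset.Ico_add_one_right_eq_Icc, sum_Ico_eq_sum_range]
  simp only [Nat.add_sub_cancel, add_comm 1, Nat.sub_zero, Nat.sub_self, Nat.add_sub_add_right]
  abel

theorem sum_Icc_Gamma_div_factorial_mul_eq (β : ℝ) {n : ℕ} (hn : 1 ≤ n) :
    ∑ k ∈ Icc 1 (n - 1), Real.Gamma ((n : ℝ) - k + 1 + β) / (n - k)! *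
        (Real.Gamma ((k : ℝ) + 1 + β) / k !) =
      ∑ p ∈ antidiagonal n, gammaDivFactorial β p.1 * gammaDivFactorial β p.2 -
        2 * gammaDivFactorial β 0 * gammaDivFactorial β n := by
  calc _ = ∑ k ∈ Icc 1 (n - 1), gammaDivFactorial β k * gammaDivFactorial β (n - k) := by
        refine sum_congr rfl fun k hk ↦ ?_
        rw [gammaDivFactorial, gammaDivFactorial, Nat.cast_sub (by grind), mul_comm]
    _ = _ := by
        rw [sum_Icc_eq_sum_antidiagonal_sub
          (fun i j ↦ gammaDivFactorial β i * gammaDivFactorial β j) hn]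
        ring

theorem tendsto_rpow_neg_mul_sum_antidiagonal_gammaDivFactorial {β : ℝ}
    (hβ : ∀ k : ℕ, (k : ℝ) + 1 + β ≠ 0) (hβ1 : β < -1) :
    Tendsto (fun n : ℕ ↦ (n : ℝ) ^ (-β) *
      ∑ p ∈ antidiagonal n, gammaDivFactorial β p.1 * gammaDivFactorial β p.2) atTop (𝓝 0) := by
  set F := fun n : ℕ ↦ ∑ p ∈ antidiagonal n, gammaDivFactorial β p.1 * gammaDivFactorial β p.2
  set c := 1 + 2 * β
  have hF (n : ℕ) : ((n : ℝ) + 1) * F (n + 1) = ((n : ℝ) + 1 + c) * F n := by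
    have ha (k : ℕ) : ((k : ℝ) + 1) * gammaDivFactorial β (k + 1) =
        ((k : ℝ) + 1 + β) * gammaDivFactorial β k := by
      rw [succ_mul_gammaDivFactorial_succ, gammaDivFactorial_add_one (hβ k)]
    rw [Finset.Nat.succ_mul_sum_antidiagonal_succ ha ha]
    ring
  obtain ⟨N, hN⟩ := exists_nat_gt (-c)
  have hG (n : ℕ) (hn : N ≤ n) : ((n : ℝ) + 1) * gammaDivFactorial c (n + 1) =
      ((n : ℝ) + 1 + c) * gammaDivFactorial c n := by
    have : (N : ℝ) ≤ n := by exact_mod_cast hn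
    rw [succ_mul_gammaDivFactorial_succ, gammaDivFactorial_add_one (by linarith)]
  have hGN : 0 < gammaDivFactorial c N :=
    div_pos (Real.Gamma_pos_of_pos (by linarith)) (by positivity)
  -- `F` and `Γ(n + 1 + c) / n!` obey the same recurrence, hence are eventually proportional.
  have hprop := mul_eq_mul_of_succ_mul_eq (fun n _ ↦ hF n) hG
  have hdecay : Tendsto (fun n : ℕ ↦ (n : ℝ) ^ (β + 1)) atTop (𝓝 0) := by
    simpa [Function.comp_def] using (tendsto_rpow_neg_atTop (by linarith : 0 < -1 - β)).comp
      tendsto_natCast_atTop_atTop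
  have h := (hdecay.mul (tendsto_rpow_neg_mul_gammaDivFactorial c)).const_mul
    (F N / gammaDivFactorial c N)
  rw [zero_mul, mul_zero] at h
  refine h.congr' ?_
  filter_upwards [eventually_ge_atTop N, eventually_gt_atTop 0] with n hn hn0
  have hn0 : (0 : ℝ) < n := by exact_mod_cast hn0
  have hFn : F n = F N / gammaDivFactorial c N * gammaDivFactorial c n := by
    rw [div_mul_eq_mul_div, ← hprop n hn, mul_div_cancel_right₀ _ hGN.ne']
  change _ = (n : ℝ) ^ (-β) * F n
  rw [hFn, ← mul_assoc ((n : ℝ) ^ (β + 1)), ← Real.rpow_add hn0, show β + 1 + -c = -β by ring]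
  ring

theorem beta_splitting_normalisation_limit (β : ℝ) (hβ1 : -2 < β) (hβ2 : β < -1) :
    Tendsto
      (fun n : ℕ => (n : ℝ) ^ (-β) *
        ∑ k ∈ Finset.Icc 1 (n - 1),
          (Real.Gamma ((n : ℝ) - (k : ℝ) + 1 + β) / (Nat.factorial (n - k) : ℝ)) *
          (Real.Gamma ((k : ℝ) + 1 + β) / (Nat.factorial k : ℝ)))
      atTop
      (𝓝 (2 * Real.Gamma (2 + β) / (-1 - β))) := by
  have hβ (k : ℕ) : (k : ℝ) + 1 + β ≠ 0 := by
    rcases k with _ | k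
    · push_cast; linarith
    · push_cast; linarith [k.cast_nonneg (α := ℝ)]
  have hlim := (tendsto_rpow_neg_mul_sum_antidiagonal_gammaDivFactorial hβ hβ2).sub
    ((tendsto_rpow_neg_mul_gammaDivFactorial β).const_mul (2 * gammaDivFactorial β 0))
  have hval : 0 - 2 * gammaDivFactorial β 0 * 1 = 2 * Real.Gamma (2 + β) / (-1 - β) := by
    have h : (1 : ℝ) + β ≠ 0 := by linarith
    have h' : (-1 : ℝ) - β ≠ 0 := by linarith
    rw [gammaDivFactorial, Nat.cast_zero, Nat.factorial_zero, Nat.cast_one, div_one, zero_add,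
      show (2 : ℝ) + β = (1 + β) + 1 by ring, Real.Gamma_add_one h]
    field_simp
    ring
  rw [hval] at hlim
  refine hlim.congr' ?_
  filter_upwards [eventually_ge_atTop 1] with n hn
  rw [sum_Icc_Gamma_div_factorial_mul_eq β hn]
  ring
end
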